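/- arXiv:2008.04477 — 3 statements merged into one kernel-verified Lean document; each statement's English description precedes it below -/
import Mathlib

section
/- For the Laplace density with scale b, the KL divergence between the density and its shift by δ equals exp(-|δ|/b) - 1 + |δ|/b. -/
open MeasureTheory Real

section KLHelpers
open Set Filter Topology

lemma intOn_Ioi (b a : ℝ) (hb : 0 < b) :
    IntegrableOn (fun y : ℝ => Real.exp (-y / b)) (Ioi a) := by
  have h := exp_neg_integrableOn_Ioi a (show (0:ℝ) < 1/b by positivity)
  refine h.congr_fun (fun x _ => ?_) measurableSet_Ioi
  congr 1; ring

lemma int_Ioi (b a : ℝ) (hb : 0 < b) :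
    ∫ y in Ioi a, Real.exp (-y / b) = b * Real.exp (-a / b) := by
  have hderiv : ∀ x ∈ Ici a, HasDerivAt (fun y : ℝ => -b * Real.exp (-y / b))
      (Real.exp (-x / b)) x := by
    intro x _
    have h1 : HasDerivAt (fun y : ℝ => -y / b) (-1 / b) x :=
      (hasDerivAt_id x).neg.div_const b
    have h2 := (h1.exp).const_mul (-b)
    refine h2.congr_deriv ?_
    field_simp
  have htend : Tendsto (fun y : ℝ => -b * Real.exp (-y / b)) atTop (𝓝 0) := by
    have : Tendsto (fun y : ℝ => -y / b) atTop atBot := by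
      apply Tendsto.atBot_div_const hb
      exact tendsto_neg_atBot_iff.mpr tendsto_id
    have := (Real.tendsto_exp_atBot.comp this).const_mul (-b)
    simpa using this
  have := integral_Ioi_of_hasDerivAt_of_tendsto' hderiv (intOn_Ioi b a hb) htend
  rw [this]; ring

lemma intOn_Iic (b : ℝ) (hb : 0 < b) :
    IntegrableOn (fun y : ℝ => Real.exp (y / b)) (Iic (0:ℝ)) := by
  rw [← Measure.map_neg_eq_self (volume : Measure ℝ)]
  have m : MeasurableEmbedding fun x : ℝ => -x := (Homeomorph.neg ℝ).measurableEmbedding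
  rw [m.integrableOn_map_iff]
  simp only [Function.comp_def, neg_preimage, neg_Iic, neg_zero]
  refine Iff.mpr integrableOn_Ici_iff_integrableOn_Ioi ((intOn_Ioi b 0 hb).congr_fun
    (fun x _ => by simp only [neg_div]) measurableSet_Ioi)

lemma int_Iic (b : ℝ) (hb : 0 < b) :
    ∫ y in Iic (0:ℝ), Real.exp (y / b) = b := by
  have : ∫ y in Iic (0:ℝ), Real.exp (y / b)
      = ∫ y in Iic (0:ℝ), (fun x => Real.exp (-x / b)) (-y) := by
    refine setIntegral_congr_fun measurableSet_Iic (fun x _ => ?_)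
    simp
  rw [this, integral_comp_neg_Iic (0:ℝ) (fun x => Real.exp (-x / b)), neg_zero, int_Ioi b 0 hb]
  simp

lemma int_mid (b δ : ℝ) (hb : 0 < b) (hδ : 0 ≤ δ) :
    ∫ y in (0:ℝ)..δ, (δ - 2*y) * Real.exp (-y / b)
      = (2*b^2 + b*δ) * Real.exp (-δ / b) - (2*b^2 - b*δ) := by
  have hderiv : ∀ x ∈ Set.uIcc (0:ℝ) δ,
      HasDerivAt (fun y : ℝ => (2*b^2 - b*δ + 2*b*y) * Real.exp (-y / b))
        ((δ - 2*x) * Real.exp (-x / b)) x := by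
    intro x _
    have h1 : HasDerivAt (fun y : ℝ => 2*b^2 - b*δ + 2*b*y) (2*b) x := by
      simpa using ((hasDerivAt_id x).const_mul (2*b)).const_add (2*b^2 - b*δ)
    have h2 : HasDerivAt (fun y : ℝ => Real.exp (-y / b)) (Real.exp (-x / b) * (-1/b)) x :=
      ((hasDerivAt_id x).neg.div_const b).exp
    have := h1.mul h2
    refine this.congr_deriv ?_
    field_simp
    ring
  have hint : IntervalIntegrable (fun y : ℝ => (δ - 2*y) * Real.exp (-y / b))
      volume 0 δ := by
    apply Continuous.intervalIntegrable
    exact (continuous_const.sub (continuous_const.mul continuous_id)).mul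
      ((continuous_id.neg.div_const b).rexp)
  have := intervalIntegral.integral_eq_sub_of_hasDerivAt hderiv hint
  rw [this]
  simp only [neg_zero, zero_div, Real.exp_zero]
  ring

set_option maxHeartbeats 1000000 in
lemma key (b d : ℝ) (hb : 0 < b) (hd : 0 ≤ d) :
    ∫ y : ℝ, Real.exp (-|y| / b) * (|y - d| - |y|)
      = 2*d*b + 2*b^2 * Real.exp (-d / b) - 2*b^2 := by
  set g : ℝ → ℝ := fun y => Real.exp (-|y| / b) * (|y - d| - |y|) with hg
  -- pointwise identifications
  have hIic : ∀ y ∈ Iic (0:ℝ), g y = d * Real.exp (y / b) := by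
    intro y hy
    simp only [hg]
    rw [abs_of_nonpos hy, abs_of_nonpos (by linarith [hy.out] : y - d ≤ 0)]
    ring_nf
  have hIoc : ∀ y ∈ Ioc (0:ℝ) d, g y = (d - 2*y) * Real.exp (-y / b) := by
    intro y hy
    simp only [hg]
    rw [abs_of_pos hy.1, abs_of_nonpos (by linarith [hy.2] : y - d ≤ 0)]
    ring_nf
  have hIoi : ∀ y ∈ Ioi d, g y = (-d) * Real.exp (-y / b) := by
    intro y hy
    simp only [hg]
    rw [abs_of_pos (lt_of_le_of_lt hd hy), abs_of_pos (by simpa [sub_pos] using hy.out)]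
    ring_nf
  -- integrability
  have int1 : IntegrableOn g (Iic (0:ℝ)) := by
    have h : IntegrableOn (fun y : ℝ => d * Real.exp (y / b)) (Iic (0:ℝ)) :=
      (intOn_Iic b hb).const_mul d
    exact h.congr_fun (fun y hy => (hIic y hy).symm) measurableSet_Iic
  have int2 : IntegrableOn g (Ioc (0:ℝ) d) := by
    apply Continuous.integrableOn_Ioc
    exact ((continuous_abs.neg.div_const b).rexp).mul
      (((continuous_id.sub continuous_const).abs).sub continuous_abs)
  have int3 : IntegrableOn g (Ioi d) := by
    have h : IntegrableOn (fun y : ℝ => -d * Real.exp (-y / b)) (Ioi d) :=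
      (intOn_Ioi b d hb).const_mul (-d)
    exact h.congr_fun (fun y hy => (hIoi y hy).symm) measurableSet_Ioi
  have int23 : IntegrableOn g (Ioi (0:ℝ)) := by
    rw [← Ioc_union_Ioi_eq_Ioi hd]
    exact int2.union int3
  -- split
  have split1 : ∫ y : ℝ, g y = (∫ y in Iic (0:ℝ), g y) + ∫ y in Ioi (0:ℝ), g y := by
    rw [← setIntegral_union (Iic_disjoint_Ioi le_rfl) measurableSet_Ioi int1 int23,
      Iic_union_Ioi, Measure.restrict_univ]
  have split2 : ∫ y in Ioi (0:ℝ), g y = (∫ y in Ioc (0:ℝ) d, g y) + ∫ y in Ioi d, g y := by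
    rw [← setIntegral_union (Ioc_disjoint_Ioi le_rfl) measurableSet_Ioi int2 int3,
      Ioc_union_Ioi_eq_Ioi hd]
  -- values
  have v1 : ∫ y in Iic (0:ℝ), g y = d * b := by
    rw [setIntegral_congr_fun measurableSet_Iic hIic, integral_const_mul, int_Iic b hb]
  have v2 : ∫ y in Ioc (0:ℝ) d, g y = (2*b^2 + b*d) * Real.exp (-d / b) - (2*b^2 - b*d) := by
    rw [setIntegral_congr_fun measurableSet_Ioc hIoc,
      ← intervalIntegral.integral_of_le hd, int_mid b d hb hd]
  have v3 : ∫ y in Ioi d, g y = -d * (b * Real.exp (-d / b)) := by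
    rw [setIntegral_congr_fun measurableSet_Ioi hIoi, integral_const_mul, int_Ioi b d hb]
  rw [split1, split2, v1, v2, v3]
  ring

end KLHelpers

open Set Filter Topology in
/-- For the Laplace density with scale `b`, the KL divergence between the density and its shift
by `δ` equals `exp(-|δ|/b) - 1 + |δ|/b`. -/
theorem kl_laplace_shift (b δ : ℝ) (hb : 0 < b)
    (γ : ℝ → ℝ) (hγ : ∀ w, γ w = (1 / (2 * b)) * Real.exp (-|w| / b)) :
    ∫ y : ℝ, γ y * Real.log (γ y / γ (y - δ)) = Real.exp (-|δ| / b) - 1 + |δ| / b := by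
  have hbne : b ≠ 0 := hb.ne'
  have step1 : ∀ y : ℝ, γ y * Real.log (γ y / γ (y - δ))
      = (1/(2*b^2)) * (Real.exp (-|y| / b) * (|y - δ| - |y|)) := by
    intro y
    rw [hγ y, hγ (y - δ),
      mul_div_mul_left _ _ (by positivity : (1/(2*b)) ≠ (0:ℝ)),
      ← Real.exp_sub, Real.log_exp]
    field_simp
    ring
  simp only [step1]
  rw [integral_const_mul]
  have habs : ∫ y : ℝ, Real.exp (-|y| / b) * (|y - δ| - |y|)
      = 2 * |δ| * b + 2*b^2 * Real.exp (-|δ| / b) - 2*b^2 := by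
    rcases le_or_gt 0 δ with h | h
    · rw [abs_of_nonneg h]; exact key b δ hb h
    · have e1 : ∫ y : ℝ, Real.exp (-|y| / b) * (|y - δ| - |y|)
          = ∫ y : ℝ, Real.exp (-|(-y)| / b) * (|(-y) - δ| - |(-y)|) :=
        (integral_neg_eq_self (fun y => Real.exp (-|y| / b) * (|y - δ| - |y|)) volume).symm
      have e2 : ∀ y : ℝ, Real.exp (-|(-y)| / b) * (|(-y) - δ| - |(-y)|)
          = Real.exp (-|y| / b) * (|y - (-δ)| - |y|) := by
        intro y
        rw [abs_neg, show -y - δ = -(y + δ) by ring, abs_neg, show y - -δ = y + δ by ring]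
      rw [e1]
      simp only [e2]
      rw [abs_of_neg h]
      exact key b (-δ) hb (by linarith)
  rw [habs]
  field_simp
  ring
end

section
/- For positive definite W and η > 0, the covariance V_ww = (η/Tr(W^{1/2}))·W^{1/2} satisfies Tr(V_ww) = η and minimizes Tr(W·V^{-1}) over all positive definite V with Tr(V) ≤ η, with minimal value Tr(W^{1/2})²/η. -/
open Real Matrix

open scoped ComplexOrder in
/-- The square root of a positive semidefinite matrix, as defined in Mathlib (Dec 2024). -/
noncomputable def Matrix.PosSemidef.sqrt {n 𝕜 : Type*} [Fintype n] [DecidableEq n] [RCLike 𝕜]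
    {A : Matrix n n 𝕜} (hA : A.PosSemidef) : Matrix n n 𝕜 :=
  hA.1.eigenvectorUnitary.1 * diagonal ((↑) ∘ (√·) ∘ hA.1.eigenvalues) *
    (star hA.1.eigenvectorUnitary : Matrix n n 𝕜)

open scoped ComplexOrder in
lemma Matrix.PosSemidef.posSemidef_sqrt {n 𝕜 : Type*} [Fintype n] [DecidableEq n] [RCLike 𝕜]
    {A : Matrix n n 𝕜} (hA : A.PosSemidef) : hA.sqrt.PosSemidef := by
  unfold Matrix.PosSemidef.sqrt
  have hD : (diagonal ((↑) ∘ (√·) ∘ hA.1.eigenvalues) : Matrix n n 𝕜).PosSemidef := by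
    rw [posSemidef_diagonal_iff]
    intro i
    simp [Real.sqrt_nonneg]
  have := hD.mul_mul_conjTranspose_same (hA.1.eigenvectorUnitary : Matrix n n 𝕜)
  simpa [star_eq_conjTranspose] using this

open scoped ComplexOrder in
lemma Matrix.PosSemidef.sqrt_mul_self {n 𝕜 : Type*} [Fintype n] [DecidableEq n] [RCLike 𝕜]
    {A : Matrix n n 𝕜} (hA : A.PosSemidef) : hA.sqrt * hA.sqrt = A := by
  unfold Matrix.PosSemidef.sqrt
  conv_rhs => rw [hA.1.spectral_theorem, Unitary.conjStarAlgAut_apply]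
  have hU : (star hA.1.eigenvectorUnitary : Matrix n n 𝕜) * (hA.1.eigenvectorUnitary : Matrix n n 𝕜) = 1 :=
    Unitary.coe_star_mul_self _
  have hd : (diagonal ((↑) ∘ (√·) ∘ hA.1.eigenvalues) : Matrix n n 𝕜) *
      diagonal ((↑) ∘ (√·) ∘ hA.1.eigenvalues) = diagonal (RCLike.ofReal ∘ hA.1.eigenvalues) := by
    rw [diagonal_mul_diagonal]
    congr 1
    funext i
    simp only [Function.comp_apply, ← RCLike.ofReal_mul]
    rw [Real.mul_self_sqrt (hA.eigenvalues_nonneg i)]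
  calc _ = (hA.1.eigenvectorUnitary : Matrix n n 𝕜) * (diagonal ((↑) ∘ (√·) ∘ hA.1.eigenvalues) *
        ((star hA.1.eigenvectorUnitary : Matrix n n 𝕜) * (hA.1.eigenvectorUnitary : Matrix n n 𝕜)) *
        diagonal ((↑) ∘ (√·) ∘ hA.1.eigenvalues)) * (star hA.1.eigenvectorUnitary : Matrix n n 𝕜) := by
          simp only [Matrix.mul_assoc]
    _ = _ := by rw [hU, Matrix.mul_one, hd]

section aux
variable {m : ℕ}

/-- The psd square root of a positive definite matrix is positive definite. -/
lemma posDef_sqrt_of_posDef {W : Matrix (Fin m) (Fin m) ℝ} (hW : W.PosDef) :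
    (hW.posSemidef.sqrt).PosDef := by
  set S := hW.posSemidef.sqrt with hS
  have hSpsd : S.PosSemidef := hW.posSemidef.posSemidef_sqrt
  refine posDef_iff_dotProduct_mulVec.mpr ⟨hSpsd.1, fun x hx => ?_⟩
  rcases lt_or_eq_of_le (hSpsd.dotProduct_mulVec_nonneg x) with h | h
  · exact h
  · exfalso
    have h0 : S *ᵥ x = 0 := (hSpsd.dotProduct_mulVec_zero_iff x).mp h.symm
    have hWx : W *ᵥ x = 0 := by
      rw [← hW.posSemidef.sqrt_mul_self, ← Matrix.mulVec_mulVec, h0, Matrix.mulVec_zero]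
    have := hW.dotProduct_mulVec_pos hx
    rw [hWx, dotProduct_zero] at this
    exact lt_irrefl 0 this

lemma trace_pos_of_posDef (hm : 0 < m) {A : Matrix (Fin m) (Fin m) ℝ} (hA : A.PosDef) :
    0 < A.trace := by
  have : ∀ i, 0 < A i i := fun i => by simpa using hA.dotProduct_mulVec_pos (x := Pi.single i 1) (by intro h; simpa using congrFun h i)
  rw [Matrix.trace]
  exact Finset.sum_pos (fun i _ => this i) (by simp [Finset.univ_nonempty_iff, ← Fin.pos_iff_nonempty, hm])

lemma trace_transpose_mul_eq_sum (A B : Matrix (Fin m) (Fin m) ℝ) :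
    (Aᵀ * B).trace = ∑ p : Fin m × Fin m, A p.1 p.2 * B p.1 p.2 := by
  rw [Matrix.trace, Fintype.sum_prod_type]
  simp only [Matrix.diag, Matrix.mul_apply, Matrix.transpose_apply]
  exact Finset.sum_comm

lemma trace_cs (A B : Matrix (Fin m) (Fin m) ℝ) :
    (Aᵀ * B).trace ^ 2 ≤ (Aᵀ * A).trace * (Bᵀ * B).trace := by
  rw [trace_transpose_mul_eq_sum, trace_transpose_mul_eq_sum, trace_transpose_mul_eq_sum]
  simpa [sq] using Finset.sum_mul_sq_le_sq_mul_sq Finset.univ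
    (fun p : Fin m × Fin m => A p.1 p.2) (fun p => B p.1 p.2)

end aux

section key
variable {m : ℕ}

lemma key_ineq {W V : Matrix (Fin m) (Fin m) ℝ} (hW : W.PosDef) (hV : V.PosDef) :
    (hW.posSemidef.sqrt).trace ^ 2 ≤ (W * V⁻¹).trace * V.trace ∧ 0 ≤ (W * V⁻¹).trace := by
  set S := hW.posSemidef.sqrt with hSdef
  set T := hV.posSemidef.sqrt with hTdef
  have hT : T.PosDef := posDef_sqrt_of_posDef hV
  have hTsymm : Tᵀ = T := by
    have := hT.1.eq
    simpa [Matrix.conjTranspose_eq_transpose_of_trivial] using this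
  have hSsymm : Sᵀ = S := by
    have := (posDef_sqrt_of_posDef hW).1.eq
    simpa [Matrix.conjTranspose_eq_transpose_of_trivial] using this
  have hTdet : IsUnit T.det := hT.det_pos.ne'.isUnit
  have hTT : T * T = V := hV.posSemidef.sqrt_mul_self
  have hSS : S * S = W := hW.posSemidef.sqrt_mul_self
  have hVinv : T⁻¹ * T⁻¹ = V⁻¹ := by rw [← Matrix.mul_inv_rev, hTT]
  have hAT : (S * T⁻¹)ᵀ = T⁻¹ * S := by
    rw [Matrix.transpose_mul, Matrix.transpose_nonsing_inv, hTsymm, hSsymm]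
  have h1 : ((S * T⁻¹)ᵀ * T).trace = S.trace := by
    rw [hAT, Matrix.mul_assoc, Matrix.trace_mul_comm, Matrix.mul_assoc,
      Matrix.mul_nonsing_inv _ hTdet, Matrix.mul_one]
  have h2 : ((S * T⁻¹)ᵀ * (S * T⁻¹)).trace = (W * V⁻¹).trace := by
    rw [hAT]
    calc (T⁻¹ * S * (S * T⁻¹)).trace
        = (T⁻¹ * (S * S * T⁻¹)).trace := by rw [Matrix.mul_assoc, Matrix.mul_assoc]
      _ = (S * S * T⁻¹ * T⁻¹).trace := by rw [Matrix.trace_mul_comm, Matrix.mul_assoc]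
      _ = (W * V⁻¹).trace := by rw [hSS, Matrix.mul_assoc, hVinv]
  have h3 : (Tᵀ * T).trace = V.trace := by rw [hTsymm, hTT]
  constructor
  · have := _root_.trace_cs (S * T⁻¹) T
    rwa [h1, h2, h3] at this
  · have := trace_transpose_mul_eq_sum (S * T⁻¹) (S * T⁻¹)
    rw [h2] at this
    rw [this]
    exact Finset.sum_nonneg fun p _ => mul_self_nonneg _

end key

/-- The covariance `V_ww = (η/Tr(W^{1/2}))·W^{1/2}` satisfies `Tr(V_ww) = η` and minimizes
`Tr(W·V⁻¹)` over positive definite `V` with `Tr(V) ≤ η`, with minimal value `Tr(W^{1/2})²/η`. -/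
theorem optimal_covariance {m : ℕ} (W : Matrix (Fin m) (Fin m) ℝ) (hW : W.PosDef)
    (hm : 0 < m) (η : ℝ) (hη : 0 < η)
    (Vww : Matrix (Fin m) (Fin m) ℝ)
    (hVww : Vww = (η / (hW.posSemidef.sqrt).trace) • hW.posSemidef.sqrt) :
    Vww.trace = η ∧
    (W * Vww⁻¹).trace = (hW.posSemidef.sqrt).trace ^ 2 / η ∧
    ∀ V : Matrix (Fin m) (Fin m) ℝ, V.PosDef → V.trace ≤ η →
      (hW.posSemidef.sqrt).trace ^ 2 / η ≤ (W * V⁻¹).trace := by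
  set S := hW.posSemidef.sqrt with hSdef
  have hS : S.PosDef := posDef_sqrt_of_posDef hW
  have htS : 0 < S.trace := trace_pos_of_posDef hm hS
  have hSdet : IsUnit S.det := hS.det_pos.ne'.isUnit
  have hc : (0:ℝ) < η / S.trace := div_pos hη htS
  have hWS : W * S⁻¹ = S := by
    rw [← hW.posSemidef.sqrt_mul_self, Matrix.mul_assoc,
      Matrix.mul_nonsing_inv _ hSdet, Matrix.mul_one]
  have hVinv : Vww⁻¹ = (η / S.trace)⁻¹ • S⁻¹ := by
    rw [hVww]
    apply Matrix.inv_eq_right_inv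
    rw [Matrix.smul_mul, Matrix.mul_smul, smul_smul, mul_inv_cancel₀ hc.ne',
      Matrix.mul_nonsing_inv _ hSdet, one_smul]
  refine ⟨?_, ?_, ?_⟩
  · rw [hVww, Matrix.trace_smul, smul_eq_mul, div_mul_cancel₀ _ htS.ne']
  · rw [hVinv, Matrix.mul_smul, Matrix.trace_smul, hWS, smul_eq_mul]
    field_simp
  · intro V hV hVtr
    obtain ⟨hkey, hnn⟩ := key_ineq hW hV
    rw [div_le_iff₀ hη]
    calc S.trace ^ 2 ≤ (W * V⁻¹).trace * V.trace := hkey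
      _ ≤ (W * V⁻¹).trace * η := by
          exact mul_le_mul_of_nonneg_left hVtr hnn
end

section
/- For any positive definite matrices W and V of the same size, Tr(W V^{-1}) · Tr(V) ≥ Tr(W^{1/2})². -/
open Real Matrix

theorem psd_sqrt_aux {m : ℕ} (W : Matrix (Fin m) (Fin m) ℝ) (hW : W.PosSemidef) :
    ((hW.1.eigenvectorUnitary : Matrix (Fin m) (Fin m) ℝ) *
      diagonal ((RCLike.ofReal : ℝ → ℝ) ∘ (√·) ∘ hW.1.eigenvalues) *
      (star hW.1.eigenvectorUnitary : Matrix (Fin m) (Fin m) ℝ)) *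
    ((hW.1.eigenvectorUnitary : Matrix (Fin m) (Fin m) ℝ) *
      diagonal ((RCLike.ofReal : ℝ → ℝ) ∘ (√·) ∘ hW.1.eigenvalues) *
      (star hW.1.eigenvectorUnitary : Matrix (Fin m) (Fin m) ℝ)) = W ∧
    ((hW.1.eigenvectorUnitary : Matrix (Fin m) (Fin m) ℝ) *
      diagonal ((RCLike.ofReal : ℝ → ℝ) ∘ (√·) ∘ hW.1.eigenvalues) *
      (star hW.1.eigenvectorUnitary : Matrix (Fin m) (Fin m) ℝ))ᵀ =
    ((hW.1.eigenvectorUnitary : Matrix (Fin m) (Fin m) ℝ) *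
      diagonal ((RCLike.ofReal : ℝ → ℝ) ∘ (√·) ∘ hW.1.eigenvalues) *
      (star hW.1.eigenvectorUnitary : Matrix (Fin m) (Fin m) ℝ)) := by
  have hU := Unitary.coe_star_mul_self hW.1.eigenvectorUnitary
  constructor
  · conv_rhs => rw [hW.1.spectral_theorem, Unitary.conjStarAlgAut_apply]
    calc _ = (hW.1.eigenvectorUnitary : Matrix (Fin m) (Fin m) ℝ) *
          (diagonal ((RCLike.ofReal : ℝ → ℝ) ∘ (√·) ∘ hW.1.eigenvalues) *
          ((star hW.1.eigenvectorUnitary : Matrix (Fin m) (Fin m) ℝ) *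
          (hW.1.eigenvectorUnitary : Matrix (Fin m) (Fin m) ℝ)) *
          diagonal ((RCLike.ofReal : ℝ → ℝ) ∘ (√·) ∘ hW.1.eigenvalues)) *
          (star hW.1.eigenvectorUnitary : Matrix (Fin m) (Fin m) ℝ) := by
            simp only [Matrix.mul_assoc]
      _ = _ := by
        rw [hU, Matrix.mul_one, diagonal_mul_diagonal]
        congr 3
        funext i
        simp [Real.mul_self_sqrt (hW.eigenvalues_nonneg i)]
  · simp [Matrix.transpose_mul, Matrix.star_eq_conjTranspose,
      Matrix.conjTranspose_eq_transpose_of_trivial, Matrix.mul_assoc]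

/-- For positive definite `W` and `V`, `Tr(W V⁻¹) · Tr(V) ≥ Tr(W^{1/2})²`. -/
theorem trace_mul_inv_trace_ge {m : ℕ} (W V : Matrix (Fin m) (Fin m) ℝ)
    (hW : W.PosDef) (hV : V.PosDef) :
    (W * V⁻¹).trace * V.trace ≥ ((hW.posSemidef.1.eigenvectorUnitary : Matrix (Fin m) (Fin m) ℝ) *
      diagonal ((RCLike.ofReal : ℝ → ℝ) ∘ (√·) ∘ hW.posSemidef.1.eigenvalues) *
      (star hW.posSemidef.1.eigenvectorUnitary : Matrix (Fin m) (Fin m) ℝ)).trace ^ 2 := by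
  set S := (hW.posSemidef.1.eigenvectorUnitary : Matrix (Fin m) (Fin m) ℝ) *
      diagonal ((RCLike.ofReal : ℝ → ℝ) ∘ (√·) ∘ hW.posSemidef.1.eigenvalues) *
      (star hW.posSemidef.1.eigenvectorUnitary : Matrix (Fin m) (Fin m) ℝ) with hSdef
  set T := (hV.posSemidef.1.eigenvectorUnitary : Matrix (Fin m) (Fin m) ℝ) *
      diagonal ((RCLike.ofReal : ℝ → ℝ) ∘ (√·) ∘ hV.posSemidef.1.eigenvalues) *
      (star hV.posSemidef.1.eigenvectorUnitary : Matrix (Fin m) (Fin m) ℝ) with hTdef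
  have hS : S * S = W := (psd_sqrt_aux W hW.posSemidef).1
  have hT : T * T = V := (psd_sqrt_aux V hV.posSemidef).1
  have hSsym : Sᵀ = S := by
    exact (psd_sqrt_aux W hW.posSemidef).2
  have hTsym : Tᵀ = T := by
    exact (psd_sqrt_aux V hV.posSemidef).2
  have hTdet : IsUnit T.det := by
    have h1 : T.det * T.det = V.det := by rw [← Matrix.det_mul, hT]
    have : V.det ≠ 0 := ne_of_gt hV.det_pos
    exact isUnit_iff_ne_zero.2 (fun h => this (by rw [← h1, h, mul_zero]))
  have hVinv : V⁻¹ = T⁻¹ * T⁻¹ := by rw [← hT, Matrix.mul_inv_rev]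
  have hTinvsym : (T⁻¹)ᵀ = T⁻¹ := by rw [Matrix.transpose_nonsing_inv, hTsym]
  set A := T⁻¹ * S with hAdef
  have hAT : Aᵀ = S * T⁻¹ := by rw [hAdef, Matrix.transpose_mul, hSsym, hTinvsym]
  have h1 : (W * V⁻¹).trace = (A * Aᵀ).trace := by
    rw [hAT, hAdef, hVinv, ← hS]
    rw [show S * S * (T⁻¹ * T⁻¹) = S * S * T⁻¹ * T⁻¹ by simp [Matrix.mul_assoc],
      Matrix.trace_mul_comm]
    simp [Matrix.mul_assoc]
  have h2 : V.trace = (T * Tᵀ).trace := by rw [hTsym, hT]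
  have h3 : S.trace = (A * T).trace := by
    rw [hAdef, Matrix.trace_mul_comm (T⁻¹ * S) T, ← Matrix.mul_assoc,
      Matrix.mul_nonsing_inv _ hTdet, Matrix.one_mul]
  rw [ge_iff_le, h1, h2, h3]
  have key := Finset.sum_mul_sq_le_sq_mul_sq Finset.univ
    (fun p : Fin m × Fin m => A p.1 p.2) (fun p : Fin m × Fin m => T p.1 p.2)
  calc (A * T).trace ^ 2
      = (∑ p : Fin m × Fin m, A p.1 p.2 * T p.1 p.2) ^ 2 := by
        rw [Matrix.trace]
        simp only [Matrix.diag_apply, Matrix.mul_apply, Fintype.sum_prod_type]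
        congr 1
        refine Finset.sum_congr rfl fun i _ => Finset.sum_congr rfl fun j _ => ?_
        rw [show T j i = Tᵀ i j from rfl, hTsym]
    _ ≤ (∑ p : Fin m × Fin m, A p.1 p.2 ^ 2) * ∑ p : Fin m × Fin m, T p.1 p.2 ^ 2 := key
    _ = (A * Aᵀ).trace * (T * Tᵀ).trace := by
        rw [Matrix.trace, Matrix.trace]
        simp only [Matrix.diag_apply, Matrix.mul_apply, Fintype.sum_prod_type,
          Matrix.transpose_apply, sq]
end
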